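/- Let H be a Krein space with canonical decomposition H = H⁻[⊕]H⁺ and canonical symmetry J, let T be a closed symmetric linear relation in H with H⁻ ⊆ D_T, and let T₀ be a dissipative linear relation in H with T ⊆ T₀. Then ℂ⁻ ∩ σ_p(T₀) ⊆ ℂ⁻ ∩ C_T, where ℂ⁻ = {λ ∈ ℂ : Im λ < 0}. -/

import Mathlib

/-!
For an eigenvector `x` of `T₀` with eigenvalue `l ∈ ℂ⁻`, dissipativity gives
`Im l · (‖P⁺x‖² - ‖P⁻x‖²) = Im [x, l x] ≥ 0`, so `‖P⁺x‖ ≤ ‖P⁻x‖` and `P⁻x ≠ 0`.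
A dissipative extension of a symmetric relation lies in its adjoint, so `(x, l x) ∈ T^c`;
pairing it with `(P⁻x, T_s P⁻x) ∈ T` yields `Im ⟪P⁺x, T_s P⁻x⟫ = Im l · ‖P⁻x‖²`, hence
`|Im l| ‖P⁻x‖² ≤ ‖P⁺x‖ ‖T_s P⁻x‖ ≤ ‖T_s P⁻‖ ‖P⁻x‖²`. Thus `|Im l| ≤ ‖T_s P⁻‖`, which already
rules out `l ∈ Γ_T`. That `‖T_s P⁻‖` is finite is the closed graph theorem for the closed
relation `T`.
-/

open Complex

noncomputable section

variable {H : Type*} [NormedAddCommGroup H] [InnerProductSpace ℂ H] [CompleteSpace H]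

/-- Indefinite inner product `[x,y] = ⟪x, J y⟫`. -/
def kip (J : H →L[ℂ] H) (x y : H) : ℂ := inner ℂ x (J y)

/-- `H⁻ = ker (J + id)`. -/
def negSet (J : H →L[ℂ] H) : Set H := {x | J x = -x}

/-- `H⁺ = ker (J - id)`. -/
def posSet (J : H →L[ℂ] H) : Set H := {x | J x = x}

/-- The canonical projection `P⁻ = (id - J)/2` onto `H⁻`. -/
def Pm (J : H →L[ℂ] H) (x : H) : H := (2⁻¹ : ℂ) • (x - J x)

/-- The canonical projection `P⁺ = (id + J)/2` onto `H⁺`. -/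
def Pp (J : H →L[ℂ] H) (x : H) : H := (2⁻¹ : ℂ) • (x + J x)

/-- `J` is a fundamental symmetry: self-adjoint and an involution. -/
structure IsFundSym (J : H →L[ℂ] H) : Prop where
  symm : ∀ x y : H, (inner ℂ (J x) y : ℂ) = inner ℂ x (J y)
  invol : ∀ x : H, J (J x) = x

def domSet (A : Set (H × H)) : Set H := {x | ∃ y, (x, y) ∈ A}
def ranSet (A : Set (H × H)) : Set H := {y | ∃ x, (x, y) ∈ A}
def mulSet (A : Set (H × H)) : Set H := {y | ((0 : H), y) ∈ A}
def kerl (A : Set (H × H)) (l : ℂ) : Set H := {x | (x, l • x) ∈ A}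
def pointSpec (A : Set (H × H)) : Set ℂ := {l | ∃ x : H, x ≠ 0 ∧ (x, l • x) ∈ A}
/-- The relation `A - l·I`. -/
def shiftRel (A : Set (H × H)) (l : ℂ) : Set (H × H) := {p | ∃ q ∈ A, p = (q.1, q.2 - l • q.1)}
def invRel (A : Set (H × H)) : Set (H × H) := {p | (p.2, p.1) ∈ A}
/-- Composition `A ∘ B` (apply `B` first). -/
def relComp (A B : Set (H × H)) : Set (H × H) := {p | ∃ y, (p.1, y) ∈ B ∧ (y, p.2) ∈ A}
def imageRel (A : Set (H × H)) (M : Set H) : Set H := {y | ∃ x ∈ M, (x, y) ∈ A}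
def setSum (A B : Set H) : Set H := {z | ∃ a ∈ A, ∃ b ∈ B, z = a + b}
/-- The relation `JT = {(x, Jy) : (x,y) ∈ T}`. -/
def JRel (J : H →L[ℂ] H) (A : Set (H × H)) : Set (H × H) := {p | ∃ q ∈ A, p = (q.1, J q.2)}
/-- Krein-space adjoint `T^c`. -/
def adjRel (J : H →L[ℂ] H) (T : Set (H × H)) : Set (H × H) :=
  {q | ∀ p ∈ T, kip J q.2 p.1 = kip J q.1 p.2}
def IsSymRel (J : H →L[ℂ] H) (T : Set (H × H)) : Prop := T ⊆ adjRel J T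
def IsDissipative (J : H →L[ℂ] H) (T : Set (H × H)) : Prop := ∀ p ∈ T, 0 ≤ (kip J p.1 p.2).im
/-- The operator part `T_s = {(x,y) ∈ T : y ⟂ Ind T}`. -/
def opPart (T : Set (H × H)) : Set (H × H) :=
  {p | p ∈ T ∧ ∀ z ∈ mulSet T, (inner ℂ p.2 z : ℂ) = 0}
/-- `‖T_s P⁻‖`: norm of `x ↦ T_s x` as an operator on `H⁻`. -/
def normTsPm (J : H →L[ℂ] H) (T : Set (H × H)) : ℝ :=
  sSup {r | ∃ p ∈ opPart T, p.1 ∈ negSet J ∧ ‖p.1‖ ≤ 1 ∧ r = ‖p.2‖}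
/-- `‖P⁻ T_s P⁻‖`: norm of `x ↦ P⁻(T_s x)` as an operator on `H⁻`. -/
def normPmTsPm (J : H →L[ℂ] H) (T : Set (H × H)) : ℝ :=
  sSup {r | ∃ p ∈ opPart T, p.1 ∈ negSet J ∧ ‖p.1‖ ≤ 1 ∧ r = ‖Pm J p.2‖}
/-- The region `Γ` determined by `m = ‖T_s P⁻‖`, `c = ‖P⁻T_s P⁻‖`. -/
def GammaSet (m c : ℝ) : Set ℂ :=
  {l | l.im ≠ 0 ∧ m < |l.im| ∧
    ‖(if 0 ≤ l.re then (1 : ℂ) else -1) + (c : ℂ) / l‖ < 2 / (1 + (m / |l.im|) ^ 2)}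
/-- `C = (ℂ∖ℝ) ∖ Γ`. -/
def CSet (m c : ℝ) : Set ℂ := {l : ℂ | l.im ≠ 0} \ GammaSet m c


open ComplexConjugate

lemma Complex.eq_zero_of_forall_le_im_mul {s : ℝ} {w : ℂ} (h : ∀ μ : ℂ, s ≤ (μ * w).im) :
    w = 0 := by
  by_contra hw
  have hpos : 0 < Complex.normSq w := Complex.normSq_pos.2 hw
  have key := h (((s - 1) / Complex.normSq w : ℝ) * I * conj w)
  rw [mul_assoc _ (conj w), ← Complex.normSq_eq_conj_mul_self, mul_comm _ I, mul_assoc I,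
    ← Complex.ofReal_mul, div_mul_cancel₀ _ hpos.ne', Complex.I_mul_im, Complex.ofReal_re] at key
  linarith

variable {E : Type*} [NormedAddCommGroup E] [InnerProductSpace ℂ E]

lemma Pm_add_Pp (J : E →L[ℂ] E) (x : E) : Pm J x + Pp J x = x := by
  rw [Pm, Pp, ← smul_add, sub_add_add_cancel, ← two_smul ℂ, smul_smul,
    inv_mul_cancel₀ two_ne_zero, one_smul]

lemma Pp_sub_Pm (J : E →L[ℂ] E) (x : E) : Pp J x - Pm J x = J x := by
  rw [Pm, Pp, ← smul_sub, add_sub_sub_cancel, ← two_smul ℂ, smul_smul,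
    inv_mul_cancel₀ two_ne_zero, one_smul]

variable {J : E →L[ℂ] E}

namespace IsFundSym

lemma conj_kip (hJ : IsFundSym J) (x y : E) : conj (kip J x y) = kip J y x := by
  rw [kip, kip, inner_conj_symm, hJ.symm]

lemma map_Pm (hJ : IsFundSym J) (x : E) : J (Pm J x) = -Pm J x := by
  rw [Pm, map_smul, map_sub, hJ.invol, ← smul_neg, neg_sub]

lemma map_Pp (hJ : IsFundSym J) (x : E) : J (Pp J x) = Pp J x := by
  rw [Pp, map_smul, map_add, hJ.invol, add_comm]

lemma inner_eq_zero_of_neg_of_pos (hJ : IsFundSym J) {u v : E} (hu : J u = -u) (hv : J v = v) :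
    inner ℂ u v = 0 := by
  have h := hJ.symm u v
  rw [hu, hv, inner_neg_left, neg_eq_iff_add_eq_zero, ← two_mul] at h
  exact (mul_eq_zero.1 h).resolve_left two_ne_zero

lemma inner_eq_zero_of_pos_of_neg (hJ : IsFundSym J) {u v : E} (hu : J u = u) (hv : J v = -v) :
    inner ℂ u v = 0 := by
  rw [← inner_conj_symm, hJ.inner_eq_zero_of_neg_of_pos hv hu, map_zero]

lemma inner_Pm (hJ : IsFundSym J) (x : E) : inner ℂ x (Pm J x) = (‖Pm J x‖ : ℂ) ^ 2 := by
  nth_rw 1 [← Pm_add_Pp J x]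
  rw [inner_add_left, hJ.inner_eq_zero_of_pos_of_neg (hJ.map_Pp x) (hJ.map_Pm x), add_zero]
  exact inner_self_eq_norm_sq_to_K _

lemma inner_Pp (hJ : IsFundSym J) (x : E) : inner ℂ x (Pp J x) = (‖Pp J x‖ : ℂ) ^ 2 := by
  nth_rw 1 [← Pm_add_Pp J x]
  rw [inner_add_left, hJ.inner_eq_zero_of_neg_of_pos (hJ.map_Pm x) (hJ.map_Pp x), zero_add]
  exact inner_self_eq_norm_sq_to_K _

lemma kip_self (hJ : IsFundSym J) (x : E) :
    kip J x x = (‖Pp J x‖ : ℂ) ^ 2 - (‖Pm J x‖ : ℂ) ^ 2 := by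
  rw [kip, ← Pp_sub_Pm, inner_sub_right, hJ.inner_Pp, hJ.inner_Pm]

/-- `Im [x, l x] = Im l · (‖P⁺x‖² - ‖P⁻x‖²)`. -/
lemma norm_Pp_le_norm_Pm (hJ : IsFundSym J) {x : E} {l : ℂ} (hl : l.im < 0)
    (hdis : 0 ≤ (kip J x (l • x)).im) : ‖Pp J x‖ ≤ ‖Pm J x‖ := by
  rw [kip, map_smul, inner_smul_right, ← kip, hJ.kip_self, ← Complex.ofReal_pow,
    ← Complex.ofReal_pow, ← Complex.ofReal_sub, Complex.mul_im, Complex.ofReal_re,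
    Complex.ofReal_im, mul_zero, zero_add] at hdis
  have : ‖Pp J x‖ ^ 2 ≤ ‖Pm J x‖ ^ 2 := by nlinarith
  exact (pow_le_pow_iff_left₀ (norm_nonneg _) (norm_nonneg _) two_ne_zero).1 this

end IsFundSym

lemma IsSymRel.im_kip_eq_zero (hJ : IsFundSym J) {T : Set (E × E)} (hT : IsSymRel J T)
    {p : E × E} (hp : p ∈ T) : (kip J p.1 p.2).im = 0 :=
  Complex.conj_eq_iff_im.1 ((hJ.conj_kip _ _).trans (hT hp p hp))

/-- The quadratic term of `μ ↦ Im [p + μ q, p + μ q]` vanishes for `q ∈ T`, so dissipativity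
forces the term linear in `μ`, which is `Im (μ ([p₁,q₂] - [p₂,q₁]))`, to vanish. -/
lemma IsDissipative.subset_adjRel (hJ : IsFundSym J) {T : Set (E × E)} {T0 : Submodule ℂ (E × E)}
    (hTsym : IsSymRel J T) (hsub : T ⊆ T0) (hdis : IsDissipative J (T0 : Set (E × E))) :
    (T0 : Set (E × E)) ⊆ adjRel J T := by
  intro p hp q hq
  have hlin : ∀ μ : ℂ, -(kip J p.1 p.2).im ≤ (μ * (kip J p.1 q.2 - kip J p.2 q.1)).im := by
    intro μ
    have h := hdis (p + μ • q) (T0.add_mem hp (T0.smul_mem μ (hsub hq)))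
    have hexp : kip J (p + μ • q).1 (p + μ • q).2 = kip J p.1 p.2
        + μ * (kip J p.1 q.2 - kip J p.2 q.1)
        + (μ * kip J p.2 q.1 + conj (μ * kip J p.2 q.1))
        + (Complex.normSq μ : ℂ) * kip J q.1 q.2 := by
      rw [map_mul, hJ.conj_kip, Complex.normSq_eq_conj_mul_self]
      simp only [kip, Prod.fst_add, Prod.snd_add, Prod.smul_fst, Prod.smul_snd, map_add,
        map_smul, inner_add_left, inner_add_right, inner_smul_left, inner_smul_right]
      ring
    rw [hexp, Complex.add_im, Complex.add_im, Complex.add_im, Complex.add_conj,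
      Complex.ofReal_im, Complex.im_ofReal_mul, hTsym.im_kip_eq_zero hJ hq] at h
    linarith
  exact (sub_eq_zero.1 (Complex.eq_zero_of_forall_le_im_mul hlin)).symm

def mulSubmodule (T : Submodule ℂ (E × E)) : Submodule ℂ E := T.comap (LinearMap.inr ℂ E E)

def opPartSubmodule (T : Submodule ℂ (E × E)) : Submodule ℂ (E × E) :=
  T ⊓ (⊤ : Submodule ℂ E).prod (mulSubmodule T)ᗮ

def negSubmodule (J : E →L[ℂ] E) : Submodule ℂ E := ((J + 1 : E →L[ℂ] E) : E →ₗ[ℂ] E).ker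

section OperatorPart

variable {T : Submodule ℂ (E × E)}

lemma mem_mulSubmodule {y : E} : y ∈ mulSubmodule T ↔ ((0 : E), y) ∈ T := Iff.rfl

lemma isClosed_mulSubmodule (hT : IsClosed (T : Set (E × E))) :
    IsClosed (mulSubmodule T : Set E) :=
  hT.preimage (continuous_const.prodMk continuous_id)

lemma mem_opPart_iff {p : E × E} : p ∈ opPart T ↔ p ∈ T ∧ p.2 ∈ (mulSubmodule T)ᗮ := by
  rw [Submodule.mem_orthogonal']
  rfl

lemma coe_opPartSubmodule : (opPartSubmodule T : Set (E × E)) = opPart T := by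
  ext p
  simp [opPartSubmodule, mem_opPart_iff]

lemma isClosed_opPart (hT : IsClosed (T : Set (E × E))) : IsClosed (opPart (T : Set (E × E))) := by
  rw [← coe_opPartSubmodule, opPartSubmodule, Submodule.coe_inf, Submodule.prod_coe,
    Submodule.top_coe]
  exact hT.inter (isClosed_univ.prod (Submodule.isClosed_orthogonal _))

lemma mem_negSubmodule {u : E} : u ∈ negSubmodule J ↔ u ∈ negSet J :=
  LinearMap.mem_ker.trans add_eq_zero_iff_eq_neg

lemma isClosed_negSubmodule : IsClosed (negSubmodule J : Set E) :=
  ContinuousLinearMap.isClosed_ker (J + 1)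

lemma eq_of_mem_opPart {u v w : E} (hv : (u, v) ∈ opPart T) (hw : (u, w) ∈ opPart T) :
    v = w := by
  rw [mem_opPart_iff] at hv hw
  have hmul : v - w ∈ mulSubmodule T := by
    rw [mem_mulSubmodule]
    simpa using T.sub_mem hv.1 hw.1
  exact sub_eq_zero.1 (Submodule.disjoint_def.1 (Submodule.orthogonal_disjoint _) _ hmul
    (sub_mem hv.2 hw.2))

variable [CompleteSpace E]

lemma exists_mem_opPart (hT : IsClosed (T : Set (E × E))) {u : E}
    (hu : u ∈ domSet (T : Set (E × E))) :
    ∃ v, (u, v) ∈ opPart T := by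
  obtain ⟨y, hy⟩ := hu
  have : CompleteSpace (mulSubmodule T) := (isClosed_mulSubmodule hT).completeSpace_coe
  obtain ⟨a, ha, b, hb, rfl⟩ := (mulSubmodule T).exists_add_mem_mem_orthogonal y
  refine ⟨b, mem_opPart_iff.2 ⟨?_, hb⟩⟩
  simpa using T.sub_mem hy (mem_mulSubmodule.1 ha)

/-- The closed graph of `T_s` over `H⁻` projects bijectively onto the Hilbert space `H⁻`;
the open mapping theorem bounds the inverse of this projection. -/
lemma exists_norm_le_of_mem_opPart (hT : IsClosed (T : Set (E × E)))
    (hdom : negSet J ⊆ domSet (T : Set (E × E))) :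
    ∃ C, 0 ≤ C ∧ ∀ p ∈ opPart T, p.1 ∈ negSet J → ‖p.2‖ ≤ C * ‖p.1‖ := by
  set N := negSubmodule J
  set G := opPartSubmodule T ⊓ N.prod ⊤
  have hG : IsClosed (G : Set (E × E)) := by
    rw [Submodule.coe_inf, Submodule.prod_coe, coe_opPartSubmodule, Submodule.top_coe]
    exact (isClosed_opPart hT).inter (isClosed_negSubmodule.prod isClosed_univ)
  have hmemG : ∀ p, p ∈ G ↔ p ∈ opPart (T : Set (E × E)) ∧ p.1 ∈ negSet J := fun p => by
    rw [Submodule.mem_inf, Submodule.mem_prod, mem_negSubmodule, ← SetLike.mem_coe,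
      coe_opPartSubmodule]
    simp
  have : CompleteSpace G := hG.completeSpace_coe
  have : CompleteSpace N := isClosed_negSubmodule.completeSpace_coe
  let π : G →L[ℂ] N := ((ContinuousLinearMap.fst ℂ E E).comp G.subtypeL).codRestrict N
    fun p => (Submodule.mem_prod.1 p.2.2).1
  have hker : π.ker = ⊥ := by
    refine (Submodule.eq_bot_iff _).2 fun g hg => ?_
    have h1 : (g : E × E).1 = 0 := congrArg Subtype.val hg
    have hg' := ((hmemG g).1 g.2).1
    rw [← Prod.mk.eta (p := (g : E × E)), h1] at hg'
    have h2 := eq_of_mem_opPart hg' (mem_opPart_iff.2 ⟨T.zero_mem, Submodule.zero_mem _⟩)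
    exact Subtype.ext (Prod.ext h1 h2)
  have hrange : π.range = ⊤ := by
    refine LinearMap.range_eq_top.2 fun n => ?_
    obtain ⟨v, hv⟩ := exists_mem_opPart hT (hdom (mem_negSubmodule.1 n.2))
    exact ⟨⟨(n, v), (hmemG _).2 ⟨hv, mem_negSubmodule.1 n.2⟩⟩, rfl⟩
  let e := ContinuousLinearEquiv.ofBijective π hker hrange
  refine ⟨‖(e.symm : N →L[ℂ] G)‖, norm_nonneg _, fun p hp hpN => ?_⟩
  let g : G := ⟨p, (hmemG p).2 ⟨hp, hpN⟩⟩
  calc ‖p.2‖ ≤ ‖(g : E × E)‖ := norm_snd_le p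
    _ = ‖e.symm (e g)‖ := by rw [e.symm_apply_apply]; rfl
    _ ≤ ‖(e.symm : N →L[ℂ] G)‖ * ‖e g‖ := (e.symm : N →L[ℂ] G).le_opNorm _
    _ = ‖(e.symm : N →L[ℂ] G)‖ * ‖p.1‖ := rfl

lemma norm_le_normTsPm (hT : IsClosed (T : Set (E × E)))
    (hdom : negSet J ⊆ domSet (T : Set (E × E))) {u v : E}
    (h : (u, v) ∈ opPart (T : Set (E × E))) (hu : u ∈ negSet J) :
    ‖v‖ ≤ normTsPm J (T : Set (E × E)) * ‖u‖ := by
  obtain ⟨C, hC0, hC⟩ := exists_norm_le_of_mem_opPart hT hdom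
  have hbdd : BddAbove {r | ∃ p ∈ opPart (T : Set (E × E)),
      p.1 ∈ negSet J ∧ ‖p.1‖ ≤ 1 ∧ r = ‖p.2‖} := by
    refine ⟨C, ?_⟩
    rintro r ⟨p, hp, hpN, hp1, rfl⟩
    exact (hC p hp hpN).trans (mul_le_of_le_one_right hC0 hp1)
  rcases eq_or_ne u 0 with rfl | hu0
  · rw [eq_of_mem_opPart h (mem_opPart_iff.2 ⟨T.zero_mem, Submodule.zero_mem _⟩)]
    simp
  have hpos : 0 < ‖u‖ := norm_pos_iff.2 hu0
  set c : ℂ := ((‖u‖⁻¹ : ℝ) : ℂ)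
  have hmem : (c • u, c • v) ∈ opPart (T : Set (E × E)) := by
    rw [← coe_opPartSubmodule] at h ⊢
    exact (opPartSubmodule T).smul_mem c h
  have hneg : c • u ∈ negSet J :=
    mem_negSubmodule.1 ((negSubmodule J).smul_mem c (mem_negSubmodule.2 hu))
  have hnorm : ∀ w : E, ‖c • w‖ = ‖w‖ / ‖u‖ := fun w => by
    rw [norm_smul, Complex.norm_real, norm_inv, norm_norm, inv_mul_eq_div]
  have hle := le_csSup hbdd ⟨(c • u, c • v), hmem, hneg, by rw [hnorm, div_self hpos.ne'], rfl⟩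
  rwa [hnorm, div_le_iff₀ hpos] at hle

end OperatorPart

namespace IsFundSym

variable {T : Set (E × E)} {x y : E} {l : ℂ}

/-- Pair `(x, l x) ∈ T^c` with `(P⁻x, y) ∈ T`; the term `⟪P⁻x, y⟫` is real by symmetry of `T`. -/
lemma im_inner_Pp_eq (hJ : IsFundSym J) (hTsym : IsSymRel J T)
    (hx : (x, l • x) ∈ adjRel J T) (hy : (Pm J x, y) ∈ T) :
    (inner ℂ (Pp J x) y).im = l.im * ‖Pm J x‖ ^ 2 := by
  have hadj : kip J (l • x) (Pm J x) = kip J x y := hx _ hy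
  have hneg : kip J (Pm J x) y = -inner ℂ (Pm J x) y := by
    rw [kip, ← hJ.symm, hJ.map_Pm, inner_neg_left]
  have hreal : (inner ℂ (Pm J x) y).im = 0 := by
    simpa [hneg] using hTsym.im_kip_eq_zero hJ hy
  rw [kip, hJ.map_Pm, inner_smul_left, inner_neg_right, hJ.inner_Pm, kip, ← hJ.symm,
    ← Pp_sub_Pm, inner_sub_left] at hadj
  have hPp : inner ℂ (Pp J x) y = inner ℂ (Pm J x) y - conj l * (‖Pm J x‖ : ℂ) ^ 2 := by
    linear_combination -hadj
  rw [hPp, Complex.sub_im, hreal, ← Complex.ofReal_pow, Complex.mul_im, Complex.ofReal_re,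
    Complex.ofReal_im, Complex.conj_im]
  ring

lemma abs_im_mul_norm_Pm_sq_le (hJ : IsFundSym J) (hTsym : IsSymRel J T)
    (hx : (x, l • x) ∈ adjRel J T) (hy : (Pm J x, y) ∈ T) (hPp : ‖Pp J x‖ ≤ ‖Pm J x‖) :
    |l.im| * ‖Pm J x‖ ^ 2 ≤ ‖Pm J x‖ * ‖y‖ :=
  calc |l.im| * ‖Pm J x‖ ^ 2 = |(inner ℂ (Pp J x) y).im| := by
        rw [hJ.im_inner_Pp_eq hTsym hx hy, abs_mul, abs_of_nonneg (sq_nonneg ‖Pm J x‖)]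
    _ ≤ ‖inner ℂ (Pp J x) y‖ := Complex.abs_im_le_norm _
    _ ≤ ‖Pp J x‖ * ‖y‖ := norm_inner_le_norm _ _
    _ ≤ ‖Pm J x‖ * ‖y‖ := by gcongr

end IsFundSym

/-- Theorem 1.3 a): non-real eigenvalues in the lower half-plane of a dissipative
extension `T₀` of a closed symmetric relation `T` with `H⁻ ⊆ D_T` lie in `C_T`. -/
theorem statement1 (J : H →L[ℂ] H) (hJ : IsFundSym J)
    (T T0 : Submodule ℂ (H × H))
    (hTclosed : IsClosed (T : Set (H × H)))
    (hTsym : IsSymRel J (T : Set (H × H)))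
    (hdom : negSet J ⊆ domSet (T : Set (H × H)))
    (hsub : (T : Set (H × H)) ⊆ (T0 : Set (H × H)))
    (hdis : IsDissipative J (T0 : Set (H × H))) :
    {l : ℂ | l.im < 0} ∩ pointSpec (T0 : Set (H × H)) ⊆
      {l : ℂ | l.im < 0} ∩
        CSet (normTsPm J (T : Set (H × H))) (normPmTsPm J (T : Set (H × H))) := by
  rintro l ⟨hl, x, hx0, hxT0⟩
  refine ⟨hl, hl.ne, fun ⟨_, hm, _⟩ => ?_⟩
  have hPp : ‖Pp J x‖ ≤ ‖Pm J x‖ := hJ.norm_Pp_le_norm_Pm hl (hdis _ hxT0)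
  have hPm : 0 < ‖Pm J x‖ := by
    refine norm_pos_iff.2 fun h => hx0 ?_
    rw [h, norm_zero] at hPp
    rw [← Pm_add_Pp J x, h, norm_le_zero_iff.1 hPp, add_zero]
  obtain ⟨y, hy⟩ := exists_mem_opPart hTclosed (hdom (hJ.map_Pm x))
  have hlow : |l.im| * ‖Pm J x‖ ^ 2 ≤ ‖Pm J x‖ * ‖y‖ :=
    hJ.abs_im_mul_norm_Pm_sq_le hTsym (hdis.subset_adjRel hJ hTsym hsub hxT0)
      hy.1 hPp
  have hup : ‖y‖ ≤ normTsPm J (T : Set (H × H)) * ‖Pm J x‖ :=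
    norm_le_normTsPm hTclosed hdom hy (hJ.map_Pm x)
  have : |l.im| * ‖Pm J x‖ ^ 2 ≤ normTsPm J (T : Set (H × H)) * ‖Pm J x‖ ^ 2 :=
    calc |l.im| * ‖Pm J x‖ ^ 2 ≤ ‖Pm J x‖ * ‖y‖ := hlow
      _ ≤ ‖Pm J x‖ * (normTsPm J (T : Set (H × H)) * ‖Pm J x‖) := by gcongr
      _ = normTsPm J (T : Set (H × H)) * ‖Pm J x‖ ^ 2 := by ring
  exact hm.not_ge (le_of_mul_le_mul_right this (pow_pos hPm 2))
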